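/- Fix a real number m ≥ 1. There exists a unique ρ* ∈ (0, e^{−1/2}) satisfying (ρ*)² · log(1/ρ*) = 1/(8m); moreover ρ* ≤ 1/2, and ρ* is the unique global minimizer of the function k̃(ρ) = ρ + √(log(1/ρ)/(2m)) over the interval (0, 1/2]. -/

import Mathlib

/-!
Write `f ρ = ρ² log(1/ρ)`. Since `f' ρ = ρ (2 log(1/ρ) - 1)`, `f` is strictly increasing on
`(0, e^{-1/2})`, which gives uniqueness, and the intermediate value theorem on `[1/(8m), 1/2]`
gives a root below `1/2` because `f (1/2) = log 2 / 4 > 1/8 ≥ 1/(8m)`. For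
`k̃ ρ = ρ + √(log(1/ρ)/(2m))` one computes `k̃' ρ = 1 - 1/√(8m f ρ)`, so `k̃' < 0` where
`f < 1/(8m)` and `k̃' > 0` where `f > 1/(8m)`: `k̃` decreases up to `ρ*` and increases after it.
-/

open Real Set

lemma half_lt_exp_neg_half : (1 : ℝ) / 2 < exp (-(1 / 2)) := by
  linarith [add_one_lt_exp (x := -(1 / 2 : ℝ)) (by norm_num)]

lemma log_one_div_pos {x : ℝ} (hx₀ : 0 < x) (hx₁ : x < 1) : 0 < log (1 / x) := by
  rw [one_div, log_inv]
  exact neg_pos.2 (log_neg hx₀ hx₁)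

lemma hasDerivAt_log_one_div {x : ℝ} (hx : x ≠ 0) :
    HasDerivAt (fun y => log (1 / y)) (-x⁻¹) x := by
  have h : (fun y : ℝ => log (1 / y)) = fun y => -log y := by
    funext y; rw [one_div, log_inv]
  exact h ▸ (hasDerivAt_log hx).neg

lemma hasDerivAt_sq_mul_log_one_div {x : ℝ} (hx : x ≠ 0) :
    HasDerivAt (fun y => y ^ 2 * log (1 / y)) (x * (2 * log (1 / x) - 1)) x := by
  refine ((hasDerivAt_pow 2 x).mul (hasDerivAt_log_one_div hx)).congr_deriv ?_
  field_simp
  ring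

lemma strictMonoOn_sq_mul_log_one_div :
    StrictMonoOn (fun y => y ^ 2 * log (1 / y)) (Ioo 0 (exp (-(1 / 2)))) := by
  refine strictMonoOn_of_deriv_pos (convex_Ioo _ _)
    (fun x hx => (hasDerivAt_sq_mul_log_one_div hx.1.ne').continuousAt.continuousWithinAt)
    fun x hx => ?_
  rw [interior_Ioo] at hx
  rw [(hasDerivAt_sq_mul_log_one_div hx.1.ne').deriv]
  have hlog : 1 / 2 < log (1 / x) := by
    rw [one_div x, log_inv, lt_neg]
    exact (log_lt_iff_lt_exp hx.1).2 hx.2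
  exact mul_pos hx.1 (by linarith)

lemma sq_mul_log_one_div_lt_self {x : ℝ} (hx : 0 < x) : x ^ 2 * log (1 / x) < x := by
  have hlog : log (1 / x) < 1 / x :=
    (log_le_sub_one_of_pos (by positivity)).trans_lt (by linarith)
  calc x ^ 2 * log (1 / x) < x ^ 2 * (1 / x) := mul_lt_mul_of_pos_left hlog (by positivity)
    _ = x := by field_simp

lemma exists_sq_mul_log_one_div_eq {c : ℝ} (hc₀ : 0 < c) (hc : c < log 2 / 4) :
    ∃ x ∈ Ioo c (1 / 2), x ^ 2 * log (1 / x) = c := by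
  have hhalf : (1 / 2 : ℝ) ^ 2 * log (1 / (1 / 2)) = log 2 / 4 := by norm_num; ring
  have hc_half : c < 1 / 2 := hc.trans (by linarith [log_two_lt_d9])
  refine intermediate_value_Ioo hc_half.le (fun x hx => ?_)
    ⟨sq_mul_log_one_div_lt_self hc₀, hhalf ▸ hc⟩
  exact (hasDerivAt_sq_mul_log_one_div (hc₀.trans_le hx.1).ne').continuousAt.continuousWithinAt

lemma hasDerivAt_add_sqrt_log_one_div {m x : ℝ} (hm : 0 < m) (hx₀ : 0 < x) (hx₁ : x < 1) :
    HasDerivAt (fun y => y + √(log (1 / y) / (2 * m)))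
      (1 - (√(8 * m * (x ^ 2 * log (1 / x))))⁻¹) x := by
  have hlog := log_one_div_pos hx₀ hx₁
  have hsqrt : √(8 * m * (x ^ 2 * log (1 / x))) = 4 * m * x * √(log (1 / x) / (2 * m)) := by
    rw [show 8 * m * (x ^ 2 * log (1 / x)) = (4 * m * x) ^ 2 * (log (1 / x) / (2 * m)) by
      field_simp; ring, sqrt_mul (sq_nonneg _), sqrt_sq (by positivity)]
  have hpos : 0 < √(log (1 / x) / (2 * m)) := sqrt_pos.2 (by positivity)
  refine ((hasDerivAt_id x).add ((hasDerivAt_sqrt (sqrt_pos.1 hpos).ne').comp x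
    ((hasDerivAt_log_one_div hx₀.ne').div_const (2 * m)))).congr_deriv ?_
  rw [hsqrt]
  field_simp
  ring

section

variable {m r : ℝ} (hm : 0 < m) (hr : r ∈ Ioo 0 (exp (-(1 / 2))))
  (hfr : r ^ 2 * log (1 / r) = 1 / (8 * m))
include hm hr hfr

lemma strictAntiOn_add_sqrt_log_one_div :
    StrictAntiOn (fun y => y + √(log (1 / y) / (2 * m))) (Ioc 0 r) := by
  have hr₁ : r < 1 := hr.2.trans (exp_lt_one_iff.2 (by norm_num))
  refine strictAntiOn_of_deriv_neg (convex_Ioc 0 r) (fun x hx =>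
    (hasDerivAt_add_sqrt_log_one_div hm hx.1 (hx.2.trans_lt hr₁)).continuousAt.continuousWithinAt)
    fun x hx => ?_
  rw [interior_Ioc] at hx
  rw [(hasDerivAt_add_sqrt_log_one_div hm hx.1 (hx.2.trans hr₁)).deriv, sub_neg]
  have hfx : x ^ 2 * log (1 / x) < 1 / (8 * m) :=
    hfr ▸ strictMonoOn_sq_mul_log_one_div ⟨hx.1, hx.2.trans hr.2⟩ hr hx.2
  have hfx₀ : 0 < 8 * m * (x ^ 2 * log (1 / x)) :=
    mul_pos (by positivity) (mul_pos (pow_pos hx.1 2) (log_one_div_pos hx.1 (hx.2.trans hr₁)))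
  refine one_lt_inv₀ (sqrt_pos.2 hfx₀) |>.2 ((sqrt_lt' one_pos).2 ?_)
  rw [lt_div_iff₀ (by positivity)] at hfx
  linarith

lemma strictMonoOn_add_sqrt_log_one_div :
    StrictMonoOn (fun y => y + √(log (1 / y) / (2 * m))) (Icc r (exp (-(1 / 2)))) := by
  have he₁ : exp (-(1 / 2)) < 1 := exp_lt_one_iff.2 (by norm_num)
  refine strictMonoOn_of_deriv_pos (convex_Icc _ _) (fun x hx =>
    (hasDerivAt_add_sqrt_log_one_div hm (hr.1.trans_le hx.1)
      (hx.2.trans_lt he₁)).continuousAt.continuousWithinAt) fun x hx => ?_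
  rw [interior_Icc] at hx
  have hx₀ : 0 < x := hr.1.trans hx.1
  rw [(hasDerivAt_add_sqrt_log_one_div hm hx₀ (hx.2.trans he₁)).deriv, sub_pos]
  have hfx : 1 / (8 * m) < x ^ 2 * log (1 / x) :=
    hfr ▸ strictMonoOn_sq_mul_log_one_div hr ⟨hx₀, hx.2⟩ hx.1
  rw [div_lt_iff₀ (by positivity)] at hfx
  refine inv_lt_one_of_one_lt₀ ((lt_sqrt zero_le_one).2 ?_)
  linarith

end

/-- For fixed real `m ≥ 1` there is a unique `ρ* ∈ (0, e^{−1/2})` with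
`ρ*²·log(1/ρ*) = 1/(8m)`; moreover `ρ* ≤ 1/2` and `ρ*` is the unique global minimizer of
`k̃(ρ) = ρ + √(log(1/ρ)/(2m))` on `(0, 1/2]`. -/
theorem min_orderStat_optimal_rho
    (m : ℝ) (hm : 1 ≤ m) :
    ∃ ρstar : ℝ, ρstar ∈ Set.Ioo 0 (Real.exp (-(1/2))) ∧
      ρstar^2 * Real.log (1/ρstar) = 1/(8*m) ∧
      (∀ ρ ∈ Set.Ioo 0 (Real.exp (-(1/2))),
        ρ^2 * Real.log (1/ρ) = 1/(8*m) → ρ = ρstar) ∧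
      ρstar ≤ 1/2 ∧
      (∀ ρ ∈ Set.Ioc (0:ℝ) (1/2), ρ ≠ ρstar →
        ρstar + Real.sqrt (Real.log (1/ρstar) / (2 * m)) <
          ρ + Real.sqrt (Real.log (1/ρ) / (2 * m))) := by
  have hm₀ : 0 < m := by linarith
  have hc : 1 / (8 * m) < log 2 / 4 := by
    rw [div_lt_div_iff₀ (by positivity) (by norm_num)]
    nlinarith [log_two_gt_d9]
  obtain ⟨r, hr_half, hfr⟩ := exists_sq_mul_log_one_div_eq (by positivity) hc
  have hr₀ : 0 < r := (one_div_pos.2 (by positivity)).trans hr_half.1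
  have hr : r ∈ Ioo 0 (exp (-(1 / 2))) := ⟨hr₀, hr_half.2.trans half_lt_exp_neg_half⟩
  refine ⟨r, hr, hfr, fun ρ hρ hfρ => strictMonoOn_sq_mul_log_one_div.injOn hρ hr
    (hfρ.trans hfr.symm), hr_half.2.le, fun ρ hρ hne => ?_⟩
  rcases hne.lt_or_gt with h | h
  · exact strictAntiOn_add_sqrt_log_one_div hm₀ hr hfr ⟨hρ.1, h.le⟩ ⟨hr₀, le_rfl⟩ h
  · exact strictMonoOn_add_sqrt_log_one_div hm₀ hr hfr ⟨le_rfl, hr.2.le⟩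
      ⟨h.le, hρ.2.trans half_lt_exp_neg_half.le⟩ h
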